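/- The one-dimensional kernel Φ(τ,y,a,b) satisfies the Gaussian upper bound Φ(τ,y,a,b) ≤ (4πτ)^{-1/2}·√(θ/sinh θ)·exp{-(1/(8τ))·(θ(cosh θ + 1)/sinh θ)·y²}, where θ = 2bτ. -/
import Mathlib


open Real

/-- Gaussian upper bound for the one-dimensional kernel `Φ(τ,y,a,b)`. -/
theorem phi_gaussian_upper_bound (a b τ y : ℝ) (hb : 0 < b) (hτ : 0 < τ) :
    (1 / Real.sqrt (4 * π * τ)) * Real.sqrt ((2 * b * τ) / Real.sinh (2 * b * τ)) *
        Real.exp (-(1 / (4 * τ)) *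
          (((2 * b * τ) * Real.cosh (2 * b * τ) / Real.sinh (2 * b * τ)) * y ^ 2
            + 4 * a * τ * ((Real.cosh (2 * b * τ) - 1) / Real.sinh (2 * b * τ)) * y
            + 8 * a ^ 2 * τ ^ 2 *
              ((Real.cosh (2 * b * τ) - 1) / ((2 * b * τ) * Real.sinh (2 * b * τ))))) ≤
      (1 / Real.sqrt (4 * π * τ)) * Real.sqrt ((2 * b * τ) / Real.sinh (2 * b * τ)) *
        Real.exp (-(1 / (8 * τ)) *
          ((2 * b * τ) * (Real.cosh (2 * b * τ) + 1) / Real.sinh (2 * b * τ)) * y ^ 2) := by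
  have hθ : 0 < 2 * b * τ := by positivity
  have hs : 0 < Real.sinh (2 * b * τ) := Real.sinh_pos_iff.mpr hθ
  have hc : 1 ≤ Real.cosh (2 * b * τ) := Real.one_le_cosh _
  apply mul_le_mul_of_nonneg_left _ (by positivity)
  rw [Real.exp_le_exp, ← sub_nonneg]
  have key : -(1 / (8 * τ)) *
          ((2 * b * τ) * (Real.cosh (2 * b * τ) + 1) / Real.sinh (2 * b * τ)) * y ^ 2
        - (-(1 / (4 * τ)) *
          (((2 * b * τ) * Real.cosh (2 * b * τ) / Real.sinh (2 * b * τ)) * y ^ 2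
            + 4 * a * τ * ((Real.cosh (2 * b * τ) - 1) / Real.sinh (2 * b * τ)) * y
            + 8 * a ^ 2 * τ ^ 2 *
              ((Real.cosh (2 * b * τ) - 1) / ((2 * b * τ) * Real.sinh (2 * b * τ))))) =
      (Real.cosh (2 * b * τ) - 1) * ((2 * b * τ) * y + 4 * a * τ) ^ 2 /
        (8 * τ * (2 * b * τ) * Real.sinh (2 * b * τ)) := by
    field_simp
    ring
  rw [key]
  apply div_nonneg (mul_nonneg (by linarith) (sq_nonneg _)) (by positivity)
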